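/- arXiv:2501.07038 — 8 statements merged into one kernel-verified Lean document; each statement's English description precedes it below -/
import Mathlib

section
/- For any tuple (x_1,...,x_m) in X^m and any point z in X, the minimal pairwise distance D_m satisfies the polygon inequality: D_m(x_1,...,x_m) ≤ Σ_{i=1}^m D_m(x_1,...,x_{i-1}, z, x_{i+1},...,x_m), where the i-th summand is obtained by replacing the i-th entry of the tuple by z. -/
open Metric Set

/-- The minimal pairwise distance of an `m`-tuple. -/
noncomputable def Dm {X : Type*} [MetricSpace X] (m : ℕ) (x : Fin m → X) : ℝ :=
  sInf {r : ℝ | ∃ i j : Fin m, i ≠ j ∧ r = dist (x i) (x j)}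

lemma Dm_bddBelow {X : Type*} [MetricSpace X] (m : ℕ) (x : Fin m → X) :
    BddBelow {r : ℝ | ∃ i j : Fin m, i ≠ j ∧ r = dist (x i) (x j)} :=
  ⟨0, fun r ⟨i, j, _, h⟩ => h ▸ dist_nonneg⟩

lemma Dm_nonneg {X : Type*} [MetricSpace X] (m : ℕ) (x : Fin m → X) : 0 ≤ Dm m x :=
  Real.sInf_nonneg (fun r ⟨_, _, _, h⟩ => h ▸ dist_nonneg)

lemma Dm_le {X : Type*} [MetricSpace X] (m : ℕ) (x : Fin m → X) {i j : Fin m} (h : i ≠ j) :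
    Dm m x ≤ dist (x i) (x j) :=
  csInf_le (Dm_bddBelow m x) ⟨i, j, h, rfl⟩

lemma le_Dm {X : Type*} [MetricSpace X] (m : ℕ) (hm : 2 ≤ m) (x : Fin m → X) {c : ℝ}
    (h : ∀ i j : Fin m, i ≠ j → c ≤ dist (x i) (x j)) : c ≤ Dm m x := by
  apply le_csInf
  · refine ⟨dist (x ⟨0, by omega⟩) (x ⟨1, by omega⟩), ⟨0, by omega⟩, ⟨1, by omega⟩, ?_, rfl⟩
    simp [Fin.ext_iff]
  · rintro r ⟨i, j, hij, rfl⟩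
    exact h i j hij

/-- Polygon inequality: `D_m x ≤ ∑ i, D_m (x with i-th entry replaced by z)`. -/
theorem polygon_inequality {X : Type*} [MetricSpace X] (m : ℕ) (hm : 2 ≤ m)
    (x : Fin m → X) (z : X) :
    Dm m x ≤ ∑ i : Fin m, Dm m (Function.update x i z) := by
  -- choose `a` minimizing `dist z (x ·)` over all indices
  obtain ⟨a, -, ha⟩ := Finset.exists_min_image Finset.univ (fun j => dist z (x j))
    ⟨⟨0, by omega⟩, Finset.mem_univ _⟩
  -- choose `b` minimizing `dist z (x ·)` over indices ≠ a
  have hane : (Finset.univ.erase a).Nonempty := by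
    rw [← Finset.card_pos, Finset.card_erase_of_mem (Finset.mem_univ a)]
    simp; omega
  obtain ⟨b, hbmem, hb⟩ := Finset.exists_min_image (Finset.univ.erase a)
    (fun j => dist z (x j)) hane
  have hab : a ≠ b := (Finset.ne_of_mem_erase hbmem).symm
  -- lower bound for the term at `a`
  have claim1 : min (dist z (x b)) (Dm m x) ≤ Dm m (Function.update x a z) := by
    apply le_Dm m hm
    intro i j hij
    rcases eq_or_ne i a with rfl | hia
    · rw [Function.update_self, Function.update_of_ne hij.symm]
      exact le_trans (min_le_left _ _) (hb j (Finset.mem_erase.2 ⟨hij.symm, Finset.mem_univ _⟩))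
    · rw [Function.update_of_ne hia]
      rcases eq_or_ne j a with rfl | hja
      · rw [Function.update_self, dist_comm (x i) z]
        exact le_trans (min_le_left _ _) (hb i (Finset.mem_erase.2 ⟨hia, Finset.mem_univ _⟩))
      · rw [Function.update_of_ne hja]
        exact le_trans (min_le_right _ _) (Dm_le m x hij)
  -- lower bound for the term at `b`
  have claim2 : min (dist z (x a)) (Dm m x) ≤ Dm m (Function.update x b z) := by
    apply le_Dm m hm
    intro i j hij
    rcases eq_or_ne i b with rfl | hib
    · rw [Function.update_self, Function.update_of_ne hij.symm]
      exact le_trans (min_le_left _ _) (ha j (Finset.mem_univ _))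
    · rw [Function.update_of_ne hib]
      rcases eq_or_ne j b with rfl | hjb
      · rw [Function.update_self, dist_comm (x i) z]
        exact le_trans (min_le_left _ _) (ha i (Finset.mem_univ _))
      · rw [Function.update_of_ne hjb]
        exact le_trans (min_le_right _ _) (Dm_le m x hij)
  -- the two chosen terms already dominate `Dm m x`
  have htwo : Dm m x ≤ Dm m (Function.update x a z) + Dm m (Function.update x b z) := by
    refine le_trans ?_ (add_le_add claim1 claim2)
    rcases min_cases (dist z (x b)) (Dm m x) with ⟨h1, -⟩ | ⟨h1, -⟩ <;>
      rcases min_cases (dist z (x a)) (Dm m x) with ⟨h2, -⟩ | ⟨h2, -⟩ <;> rw [h1, h2]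
    · calc Dm m x ≤ dist (x a) (x b) := Dm_le m x hab
        _ ≤ dist (x a) z + dist z (x b) := dist_triangle _ _ _
        _ = dist z (x b) + dist z (x a) := by rw [dist_comm (x a) z]; ring
    · linarith [dist_nonneg (x := z) (y := x b)]
    · linarith [dist_nonneg (x := z) (y := x a)]
    · linarith [Dm_nonneg m x]
  -- conclude: all terms are nonnegative
  calc Dm m x ≤ Dm m (Function.update x a z) + Dm m (Function.update x b z) := htwo
    _ = ∑ i ∈ ({a, b} : Finset (Fin m)), Dm m (Function.update x i z) :=
        (Finset.sum_pair (f := fun i => Dm m (Function.update x i z)) hab).symm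
    _ ≤ ∑ i : Fin m, Dm m (Function.update x i z) :=
        Finset.sum_le_sum_of_subset_of_nonneg (Finset.subset_univ _)
          (fun i _ _ => Dm_nonneg m _)
end

section
/- For a compact subset W ⊆ X and δ > 0, the set C(W,δ) := { K ∈ K(X) : ∃ x ∈ W with closure(B_δ(x)) ⊆ K } is compact in the Hausdorff metric topology on K(X). -/
/-!
A pair `(x, K)` satisfies `B_δ(x) ⊆ K` iff `y ∈ K` for every `y` with `dist y x < δ`. Each
`{K | y ∈ K}` is closed in `K(X)`, whose Hausdorff-metric topology is the Vietoris topology, so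
these pairs form a closed subset of `X × K(X)`. Since `K` is closed, `closure (B_δ(x)) ⊆ K` iff
`B_δ(x) ⊆ K`, so `C(W, δ)` is the projection to `K(X)` of the compact set of such pairs with
`x ∈ W`.
-/

open Metric Set TopologicalSpace

theorem TopologicalSpace.NonemptyCompacts.isClosed_setOf_mem {X : Type*} [TopologicalSpace X]
    [T1Space X] (y : X) : IsClosed {K : NonemptyCompacts X | y ∈ (K : Set X)} := by
  simpa only [inter_singleton_nonempty] using
    NonemptyCompacts.isClosed_inter_nonempty_of_isClosed (isClosed_singleton (x := y))

theorem isClosed_setOf_ball_subset {X : Type*} [MetricSpace X] (δ : ℝ) :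
    IsClosed {p : X × NonemptyCompacts X | ball p.1 δ ⊆ p.2} := by
  have hball (y : X) : IsOpen {p : X × NonemptyCompacts X | y ∈ ball p.1 δ} := by
    simp only [mem_ball]
    exact isOpen_lt (continuous_const.dist continuous_fst) continuous_const
  simp only [subset_def, ofPred_forall, imp_iff_not_or, ofPred_or]
  exact isClosed_iInter fun y =>
    (hball y).isClosed_compl.union ((NonemptyCompacts.isClosed_setOf_mem y).preimage continuous_snd)

theorem isCompact_C_W_delta_general {X : Type*} [MetricSpace X] [CompactSpace X]
    (W : Set X) (hW : IsCompact W) (δ : ℝ) :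
    IsCompact {K : NonemptyCompacts X | ∃ x ∈ W, closure (Metric.ball x δ) ⊆ (K : Set X)} := by
  have hC : {K : NonemptyCompacts X | ∃ x ∈ W, closure (ball x δ) ⊆ (K : Set X)} =
      Prod.snd '' (W ×ˢ univ ∩ {p : X × NonemptyCompacts X | ball p.1 δ ⊆ p.2}) := by
    ext K
    simp [K.isCompact.isClosed.closure_subset_iff]
  rw [hC]
  exact ((hW.prod isCompact_univ).inter_right (isClosed_setOf_ball_subset δ)).image continuous_snd

theorem isCompact_C_W_delta {X : Type*} [MetricSpace X] [CompactSpace X]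
    (W : Set X) (hW : IsCompact W) (δ : ℝ) (hδ : 0 < δ) :
    IsCompact {K : NonemptyCompacts X | ∃ x ∈ W, closure (Metric.ball x δ) ⊆ (K : Set X)} :=
  isCompact_C_W_delta_general W hW δ
end

section
/- Let π : X → Y be a continuous surjection between compact metric spaces. Then the set J_m := { y ∈ Y : card(π⁻¹({y})) ≤ m } is a G_δ subset of Y, and the set I_m := { x ∈ X : card(π⁻¹({π(x)})) ≤ m } is a G_δ subset of X, and I_m = π⁻¹(J_m). -/
/-!
A fibre has more than `m` points exactly when it is `π (v 0)` for a tuple `v` of `m + 1`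
distinct points of one fibre. Those tuples form a closed set minus a closed set in the compact
metrizable space `X ^ (m + 1)`, where closed sets are `G_δ`, hence a σ-compact set; its continuous image in `Y` is σ-compact,
and the complement of a σ-compact subset of a Hausdorff space is a `G_δ`.
-/

open Set Function Cardinal

lemma IsClosed.isSigmaCompact_diff {X : Type*} [TopologicalSpace X] [CompactSpace X]
    [PerfectlyNormalSpace X] {s t : Set X} (hs : IsClosed s) (ht : IsClosed t) :
    IsSigmaCompact (s \ t) := by
  obtain ⟨U, hU, rfl⟩ := ht.isGδ.eq_iInter_nat
  rw [sdiff_eq, compl_iInter, inter_iUnion]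
  exact isSigmaCompact_iUnion_of_isCompact _ fun n ↦ (hs.inter (hU n).isClosed_compl).isCompact

lemma IsSigmaCompact.isGδ_compl {X : Type*} [TopologicalSpace X] [T2Space X] {s : Set X}
    (hs : IsSigmaCompact s) : IsGδ sᶜ := by
  obtain ⟨K, hK, rfl⟩ := hs
  rw [compl_iUnion]
  exact .iInter fun n ↦ (hK n).isClosed.isOpen_compl.isGδ

lemma isClosed_setOf_not_injective {ι X : Type*} [Finite ι] [TopologicalSpace X] [T2Space X] :
    IsClosed {v : ι → X | ¬Injective v} := by
  have : {v : ι → X | ¬Injective v} = ⋃ (i) (j) (_ : i ≠ j), {v | v i = v j} := by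
    ext v
    simp [Injective, not_forall, and_comm]
  rw [this]
  exact isClosed_iUnion_of_finite fun i ↦ isClosed_iUnion_of_finite fun j ↦
    isClosed_iUnion_of_finite fun _ ↦ isClosed_eq (continuous_apply i) (continuous_apply j)

lemma Cardinal.natCast_lt_mk_iff_exists_injective {α : Type*} (s : Set α) (m : ℕ) :
    (m : Cardinal) < #s ↔ ∃ v : Fin (m + 1) → α, Injective v ∧ ∀ i, v i ∈ s := by
  rw [← natCast_add_one_le_iff, ← Nat.cast_add_one, ← lift_mk_fin, ← lift_uzero #s, lift_mk_le']
  constructor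
  · rintro ⟨e⟩
    exact ⟨fun i ↦ e i, Subtype.val_injective.comp e.injective, fun i ↦ (e i).2⟩
  · rintro ⟨v, hv, hvs⟩
    exact ⟨⟨fun i ↦ ⟨v i, hvs i⟩, fun i j h ↦ hv (congrArg Subtype.val h)⟩⟩

def injectiveFiberTuples {X Y : Type*} (π : X → Y) (m : ℕ) : Set (Fin (m + 1) → X) :=
  {v | ∀ i, π (v i) = π (v 0)} \ {v | ¬Injective v}

lemma setOf_natCast_lt_mk_fiber_eq_image {X Y : Type*} (π : X → Y) (m : ℕ) :
    {y | (m : Cardinal) < #(π ⁻¹' {y})} =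
      (fun v ↦ π (v 0)) '' injectiveFiberTuples π m := by
  ext y
  simp only [mem_ofPred_eq, natCast_lt_mk_iff_exists_injective, injectiveFiberTuples,
    mem_image, mem_sdiff, mem_preimage, mem_singleton_iff, not_not]
  constructor
  · rintro ⟨v, hv, hvy⟩
    exact ⟨v, ⟨fun i ↦ by rw [hvy, hvy], hv⟩, hvy 0⟩
  · rintro ⟨v, ⟨hπv, hv⟩, rfl⟩
    exact ⟨v, hv, hπv⟩

lemma isGδ_setOf_mk_fiber_le {X Y : Type*} [TopologicalSpace X] [CompactSpace X]
    [TopologicalSpace.MetrizableSpace X] [TopologicalSpace Y] [T2Space Y]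
    {π : X → Y} (hπ : Continuous π) (m : ℕ) :
    IsGδ {y | #(π ⁻¹' {y}) ≤ m} := by
  have hclosed : IsClosed {v : Fin (m + 1) → X | ∀ i, π (v i) = π (v 0)} :=
    ofPred_forall _ ▸ isClosed_iInter fun i ↦ isClosed_eq (by fun_prop) (by fun_prop)
  have hσ : IsSigmaCompact ((fun v ↦ π (v 0)) '' injectiveFiberTuples π m) :=
    (hclosed.isSigmaCompact_diff isClosed_setOf_not_injective).image (hπ.comp (continuous_apply 0))
  simpa only [← setOf_natCast_lt_mk_fiber_eq_image, compl_ofPred, not_lt] using hσ.isGδ_compl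

theorem mjectivity_points_Gdelta_general
    {X Y : Type*} [MetricSpace X] [CompactSpace X] [MetricSpace Y]
    (π : X → Y) (hπ : Continuous π) (m : ℕ) :
    IsGδ {y : Y | Cardinal.mk (π ⁻¹' {y}) ≤ m} ∧
    IsGδ {x : X | Cardinal.mk (π ⁻¹' {π x}) ≤ m} ∧
    {x : X | Cardinal.mk (π ⁻¹' {π x}) ≤ m} = π ⁻¹' {y : Y | Cardinal.mk (π ⁻¹' {y}) ≤ m} := by
  have hJ := isGδ_setOf_mk_fiber_le hπ m
  exact ⟨hJ, hJ.preimage (s := {y | Cardinal.mk (π ⁻¹' {y}) ≤ m}) hπ, rfl⟩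

theorem mjectivity_points_Gdelta
    {X Y : Type*} [MetricSpace X] [CompactSpace X] [MetricSpace Y] [CompactSpace Y]
    (π : X → Y) (hπ : Continuous π) (hsurj : Function.Surjective π) (m : ℕ) (hm : 1 ≤ m) :
    IsGδ {y : Y | Cardinal.mk (π ⁻¹' {y}) ≤ m} ∧
    IsGδ {x : X | Cardinal.mk (π ⁻¹' {π x}) ≤ m} ∧
    {x : X | Cardinal.mk (π ⁻¹' {π x}) ≤ m} = π ⁻¹' {y : Y | Cardinal.mk (π ⁻¹' {y}) ≤ m} :=
  mjectivity_points_Gdelta_general π hπ m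
end

section
/- Let π : X → Y be a continuous surjection between compact metric spaces and suppose x_0 ∈ X satisfies card(π⁻¹({π(x_0)})) ≤ m. Then for every ε > 0 there exists η > 0 such that diam_{m+1}(π⁻¹(B_η(y))) < ε for every y ∈ B_η(π(x_0)). -/
/-!
For `δ > 0`, the `n`-tuples of points pairwise at least `δ` apart form a closed, hence compact,
subset `K` of `Xⁿ`. Its image under `π` taken coordinatewise is compact and misses the diagonal
point `(π x₀, …, π x₀)`, since a preimage would be `n` distinct points of a fibre with fewer than
`n` points. So some ball around that diagonal point misses the image of `K`: any tuple whose
points all map close to `π x₀` has two points closer than `δ`. Taking `δ = ε / 2` bounds the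
supremum defining `diamm` by `ε / 2 < ε`.
-/

open Metric Set

/-- The multivariate diameter of a set. -/
noncomputable def diamm {X : Type*} [MetricSpace X] (m : ℕ) (A : Set X) : ℝ :=
  sSup {r : ℝ | ∃ a : Fin m → X, (∀ i, a i ∈ A) ∧ r = Dm m a}

theorem Dm_le_dist {X : Type*} [MetricSpace X] {n : ℕ} (x : Fin n → X) {i j : Fin n}
    (hij : i ≠ j) : Dm n x ≤ dist (x i) (x j) :=
  csInf_le ⟨0, fun _ ⟨_, _, _, hr⟩ => hr ▸ dist_nonneg⟩ ⟨i, j, hij, rfl⟩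

theorem Cardinal.natCast_le_mk_of_injective {X : Type*} {s : Set X} {n : ℕ} {a : Fin n → X}
    (ha : Function.Injective a) (hs : ∀ i, a i ∈ s) : (n : Cardinal) ≤ Cardinal.mk s := by
  have hrange := Cardinal.mk_range_eq_of_injective ha
  rw [Cardinal.lift_uzero, Cardinal.lift_mk_fin] at hrange
  exact hrange ▸ Cardinal.mk_le_mk_of_subset (range_subset_iff.2 hs)

theorem isClosed_setOf_forall_ne_le_dist {ι X : Type*} [PseudoMetricSpace X] (δ : ℝ) :
    IsClosed {a : ι → X | ∀ i j, i ≠ j → δ ≤ dist (a i) (a j)} := by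
  simp only [ofPred_forall]
  exact isClosed_iInter fun i => isClosed_iInter fun j => isClosed_iInter fun _ =>
    isClosed_le continuous_const ((continuous_apply i).dist (continuous_apply j))

theorem exists_pos_forall_Dm_lt_of_mk_fiber_lt {X Y : Type*} [MetricSpace X] [CompactSpace X]
    [MetricSpace Y] {π : X → Y} (hπ : Continuous π) {y₀ : Y} {n : ℕ}
    (hfib : Cardinal.mk (π ⁻¹' {y₀}) < n) {δ : ℝ} (hδ : 0 < δ) :
    ∃ η > 0, ∀ a : Fin n → X, (∀ i, dist (π (a i)) y₀ < η) → Dm n a < δ := by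
  set K : Set (Fin n → X) := {a | ∀ i j, i ≠ j → δ ≤ dist (a i) (a j)}
  have hK : IsClosed K := isClosed_setOf_forall_ne_le_dist δ
  set F : (Fin n → X) → Fin n → Y := fun a i => π (a i)
  have hF : Continuous F := continuous_pi fun i => hπ.comp (continuous_apply i)
  have hFK : IsClosed (F '' K) := (hK.isCompact.image hF).isClosed
  have hy₀ : (fun _ => y₀) ∉ F '' K := by
    rintro ⟨a, haK, hFa⟩
    have ha : Function.Injective a := fun i j hij => by
      by_contra hne
      have := haK i j hne
      rw [hij, dist_self] at this
      linarith
    exact hfib.not_ge (Cardinal.natCast_le_mk_of_injective ha fun i => congrFun hFa i)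
  obtain ⟨η, hη, hball⟩ := Metric.isOpen_iff.1 hFK.isOpen_compl _ hy₀
  refine ⟨η, hη, fun a ha => ?_⟩
  have haK : a ∉ K := fun haK => hball ((dist_pi_lt_iff hη).2 ha) ⟨a, haK, rfl⟩
  simp only [K, mem_ofPred_eq, not_forall, not_le] at haK
  obtain ⟨i, j, hij, hlt⟩ := haK
  exact (Dm_le_dist a hij).trans_lt hlt

theorem diamm_preimage_ball_small_near_mjectivity_point_general
    {X Y : Type*} [MetricSpace X] [CompactSpace X] [MetricSpace Y]
    (π : X → Y) (hπ : Continuous π) (m : ℕ)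
    (x₀ : X) (hx₀ : Cardinal.mk (π ⁻¹' {π x₀}) ≤ m) :
    ∀ ε > 0, ∃ η > 0, ∀ y ∈ Metric.ball (π x₀) η,
      diamm (m + 1) (π ⁻¹' Metric.ball y η) < ε := by
  intro ε hε
  have hfib : Cardinal.mk (π ⁻¹' {π x₀}) < (m + 1 : ℕ) :=
    hx₀.trans_lt (by exact_mod_cast m.lt_succ_self)
  obtain ⟨η, hη, hsmall⟩ := exists_pos_forall_Dm_lt_of_mk_fiber_lt hπ hfib (half_pos hε)
  refine ⟨η / 2, half_pos hη, fun y hy => ?_⟩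
  refine (Real.sSup_le ?_ (half_pos hε).le).trans_lt (half_lt_self hε)
  rintro _ ⟨a, ha, rfl⟩
  refine (hsmall a fun i => ?_).le
  calc dist (π (a i)) (π x₀) ≤ dist (π (a i)) y + dist y (π x₀) := dist_triangle _ _ _
    _ < η / 2 + η / 2 := add_lt_add (ha i) hy
    _ = η := add_halves η

theorem diamm_preimage_ball_small_near_mjectivity_point
    {X Y : Type*} [MetricSpace X] [CompactSpace X] [MetricSpace Y] [CompactSpace Y]
    (π : X → Y) (hπ : Continuous π) (hsurj : Function.Surjective π) (m : ℕ) (hm : 1 ≤ m)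
    (x₀ : X) (hx₀ : Cardinal.mk (π ⁻¹' {π x₀}) ≤ m) :
    ∀ ε > 0, ∃ η > 0, ∀ y ∈ Metric.ball (π x₀) η,
      diamm (m + 1) (π ⁻¹' Metric.ball y η) < ε :=
  diamm_preimage_ball_small_near_mjectivity_point_general π hπ m x₀ hx₀
end

section
/- Let π : X → Y be a factor map of topological dynamical systems with X minimal (every orbit dense). If there exists at least one point x ∈ X with card(π⁻¹({π(x)})) ≤ m, then the set I_m of such points is residual in X (i.e. π is almost m:1). -/
open Metric Set

theorem almost_m_to_one_of_exists_mjectivity_point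
    {G X Y : Type*} [Group G] [MetricSpace X] [CompactSpace X] [MetricSpace Y] [CompactSpace Y]
    [MulAction G X] [MulAction G Y]
    (hcontX : ∀ g : G, Continuous fun x : X => g • x)
    (hcontY : ∀ g : G, Continuous fun y : Y => g • y)
    (hmin : ∀ x : X, Dense (MulAction.orbit G x))
    (π : X → Y) (hπ : Continuous π) (hsurj : Function.Surjective π)
    (hequiv : ∀ (g : G) (x : X), π (g • x) = g • π x)
    (m : ℕ) (hm : 1 ≤ m)
    (hx : ∃ x : X, Cardinal.mk (π ⁻¹' {π x}) ≤ m) :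
    {x : X | Cardinal.mk (π ⁻¹' {π x}) ≤ m} ∈ residual X := by
  obtain ⟨x₀, hx₀⟩ := hx
  set A : ℝ → Set X := fun ε =>
    {x | ∃ S : Finset X, S.card ≤ m ∧ π ⁻¹' {π x} ⊆ ⋃ s ∈ S, Metric.ball s ε} with hA
  -- every point with small fiber is in A ε for all ε > 0
  have hsmall : ∀ x : X, Cardinal.mk (π ⁻¹' {π x}) ≤ m → ∀ ε : ℝ, 0 < ε → x ∈ A ε := by
    intro x hxm ε hε
    have hfin : (π ⁻¹' {π x}).Finite := by
      rw [← Cardinal.lt_aleph0_iff_set_finite]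
      exact lt_of_le_of_lt hxm (Cardinal.nat_lt_aleph0 m)
    refine ⟨hfin.toFinset, ?_, ?_⟩
    · have h1 : Cardinal.mk (π ⁻¹' {π x}) = hfin.toFinset.card := by
        rw [← Cardinal.mk_coe_finset]
        exact Cardinal.mk_congr (Equiv.subtypeEquiv (Equiv.refl X) (by simp))
      rw [h1] at hxm
      exact_mod_cast hxm
    · intro z hz
      exact Set.mem_biUnion (hfin.mem_toFinset.mpr hz) (mem_ball_self hε)
  -- every orbit point of x₀ has small fiber
  have horb : ∀ z ∈ MulAction.orbit G x₀, Cardinal.mk (π ⁻¹' {π z}) ≤ m := by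
    rintro z ⟨g, rfl⟩
    have himg : π ⁻¹' {π (g • x₀)} = (fun w => g • w) '' (π ⁻¹' {π x₀}) := by
      ext w
      simp only [Set.mem_preimage, Set.mem_singleton_iff, Set.mem_image]
      constructor
      · intro hw
        refine ⟨g⁻¹ • w, ?_, by simp⟩
        have : π (g⁻¹ • w) = g⁻¹ • π w := hequiv g⁻¹ w
        rw [this, hw, hequiv g x₀]
        simp
      · rintro ⟨v, hv, rfl⟩
        rw [hequiv g v, hv, ← hequiv g x₀, hequiv g x₀]
    rw [himg, Cardinal.mk_image_eq (MulAction.injective g)]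
    exact hx₀
  -- A ε is open
  have hopen : ∀ ε : ℝ, IsOpen (A ε) := by
    intro ε
    rw [isOpen_iff_forall_mem_open]
    rintro x ⟨S, hScard, hScov⟩
    set U : Set X := ⋃ s ∈ S, Metric.ball s ε with hU
    have hUopen : IsOpen U := isOpen_biUnion (fun _ _ => isOpen_ball)
    have hKcompact : IsCompact Uᶜ := hUopen.isClosed_compl.isCompact
    have hclosed : IsClosed (π '' Uᶜ) := (hKcompact.image hπ).isClosed
    refine ⟨π ⁻¹' (π '' Uᶜ)ᶜ, ?_, hclosed.isOpen_compl.preimage hπ, ?_⟩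
    · intro x' hx'
      refine ⟨S, hScard, ?_⟩
      intro z hz
      by_contra hzU
      exact hx' ⟨z, hzU, hz⟩
    · intro hmem
      obtain ⟨k, hk, hkx⟩ := hmem
      exact hk (hScov hkx)
  -- A ε is dense for ε > 0
  have hdense : ∀ ε : ℝ, 0 < ε → Dense (A ε) := by
    intro ε hε
    refine Dense.mono ?_ (hmin x₀)
    intro z hz
    exact hsmall z (horb z hz) ε hε
  -- the intersection is contained in the target set
  have hsubset : (⋂ n : ℕ, A (1 / (n + 1))) ⊆ {x : X | Cardinal.mk (π ⁻¹' {π x}) ≤ m} := by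
    intro x hxA
    simp only [Set.mem_iInter] at hxA
    by_contra hcard
    simp only [Set.mem_setOf_eq, not_le] at hcard
    have hkey : ∃ t : Set X, t ⊆ π ⁻¹' {π x} ∧ t.Finite ∧ t.ncard = m + 1 := by
      by_cases hfin : (π ⁻¹' {π x}).Finite
      · have hmlt : m < (π ⁻¹' {π x}).ncard := by
          have h1 : Cardinal.mk (π ⁻¹' {π x}) < Cardinal.aleph0 :=
            Cardinal.lt_aleph0_iff_set_finite.mpr hfin
          have h2 : ((Cardinal.toNat (Cardinal.mk (π ⁻¹' {π x}))) : Cardinal)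
              = Cardinal.mk (π ⁻¹' {π x}) := Cardinal.cast_toNat_of_lt_aleph0 h1
          have h3 : (m : Cardinal) < ((Cardinal.toNat (Cardinal.mk (π ⁻¹' {π x}))) : Cardinal) := by
            rw [h2]; exact hcard
          have h4 : m < Cardinal.toNat (Cardinal.mk (π ⁻¹' {π x})) := by exact_mod_cast h3
          rwa [show Cardinal.toNat (Cardinal.mk (π ⁻¹' {π x})) = (π ⁻¹' {π x}).ncard from
            Nat.card_coe_set_eq _] at h4
        obtain ⟨t, hts, htc⟩ := Set.exists_subset_card_eq (show m + 1 ≤ _ from hmlt)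
        exact ⟨t, hts, hfin.subset hts, htc⟩
      · obtain ⟨t, hts, htf, htc⟩ := Set.Infinite.exists_subset_ncard_eq hfin (m + 1)
        exact ⟨t, hts, htf, htc⟩
    obtain ⟨t, hts, htf, htc⟩ := hkey
    have htcard : htf.toFinset.card = m + 1 := by
      rw [← Set.ncard_eq_toFinset_card t htf]
      exact htc
    set e := Finset.equivFinOfCardEq htcard with he
    set p : Fin (m + 1) → X := fun i => ((e.symm i : htf.toFinset) : X) with hp
    have hpfib : ∀ i, p i ∈ π ⁻¹' {π x} := fun i =>
      hts (htf.mem_toFinset.mp (e.symm i).2)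
    have hpinj : Function.Injective p := fun i j hij => by
      have : (e.symm i : htf.toFinset) = (e.symm j : htf.toFinset) := Subtype.ext hij
      simpa using e.symm.injective this
    -- minimal pairwise distance
    have hne : (Finset.univ.filter
        (fun ij : Fin (m + 1) × Fin (m + 1) => ij.1 ≠ ij.2)).Nonempty := by
      refine ⟨(0, 1), ?_⟩
      simp only [Finset.mem_filter, Finset.mem_univ, true_and]
      intro h01
      have : (0 : Fin (m + 1)) = 1 := h01
      have h2 : 2 ≤ m + 1 := by omega
      exact absurd (Fin.val_eq_val _ _ |>.mpr this) (by
        simp [Fin.val_zero, Fin.val_one'] ; omega)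
    set δ : ℝ := (Finset.univ.filter
        (fun ij : Fin (m + 1) × Fin (m + 1) => ij.1 ≠ ij.2)).inf' hne
        (fun ij => dist (p ij.1) (p ij.2)) with hδ
    have hδpos : 0 < δ := by
      rw [hδ, Finset.lt_inf'_iff]
      rintro ⟨i, j⟩ hij
      simp only [Finset.mem_filter, Finset.mem_univ, true_and] at hij
      exact dist_pos.mpr (fun h => hij (hpinj h))
    have hδle : ∀ i j : Fin (m + 1), i ≠ j → δ ≤ dist (p i) (p j) := by
      intro i j hij
      refine Finset.inf'_le (fun ij : Fin (m + 1) × Fin (m + 1) => dist (p ij.1) (p ij.2)) (b := (i, j)) ?_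
      simp only [Finset.mem_filter, Finset.mem_univ, true_and]
      exact hij
    obtain ⟨n, hn⟩ := exists_nat_one_div_lt (show (0:ℝ) < δ / 2 by linarith)
    obtain ⟨S, hScard, hScov⟩ := hxA n
    -- pigeonhole
    have hchoice : ∀ i : Fin (m + 1), ∃ s ∈ S, p i ∈ Metric.ball s (1 / (n + 1)) := by
      intro i
      have := hScov (hpfib i)
      simpa using this
    choose σ hσS hσball using hchoice
    have hcardlt : Fintype.card {s // s ∈ S} < Fintype.card (Fin (m + 1)) := by
      simp only [Fintype.card_coe, Fintype.card_fin]
      omega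
    obtain ⟨i, j, hij, heq⟩ :=
      Fintype.exists_ne_map_eq_of_card_lt (fun i => (⟨σ i, hσS i⟩ : {s // s ∈ S})) hcardlt
    have hσeq : σ i = σ j := congrArg Subtype.val heq
    have h1 : dist (p i) (p j) ≤ dist (p i) (σ i) + dist (σ i) (p j) := dist_triangle _ _ _
    have h2 : dist (p i) (σ i) < 1 / (n + 1) := (mem_ball.mp (hσball i))
    have h3 : dist (σ i) (p j) < 1 / (n + 1) := by
      rw [dist_comm, hσeq]
      exact mem_ball.mp (hσball j)
    have := hδle i j hij
    have hnn : (1:ℝ) / (n + 1) < δ / 2 := by exact_mod_cast hn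
    linarith
  -- conclude
  refine Filter.mem_of_superset ?_ hsubset
  rw [countable_iInter_mem]
  intro n
  exact residual_of_dense_open (hopen _) (hdense _ (by positivity))
end

section
/- Let K ⊆ G be compact, where G acts continuously on a compact metric space X. Then the map κ_K : X → ℝ≥0, x ↦ sup_{y ∈ X} d(y, K·x), measuring how far the partial orbit K·x is from being ε-dense, is continuous. -/
open Metric Set

/-! Both the distance from `y` to the partial orbit `K • x` and its supremum over `y` are
extrema of a jointly continuous function over a compact set, and such extrema depend
continuously on the remaining parameters. -/

theorem Metric.infDist_eq_sInf_image {α : Type*} [PseudoMetricSpace α] (x : α) (s : Set α) :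
    infDist x s = sInf (dist x '' s) := by
  rw [infDist_eq_iInf, sInf_image']

theorem IsCompact.continuous_infDist_image {α β γ : Type*} [PseudoMetricSpace α]
    [TopologicalSpace β] [TopologicalSpace γ] {f : γ → β → α} {K : Set β} (hK : IsCompact K)
    (hf : Continuous ↿f) : Continuous fun p : γ × α => infDist p.2 (f p.1 '' K) := by
  simp_rw [infDist_eq_sInf_image, image_image]
  exact hK.continuous_sInf (f := fun (p : γ × α) k => dist p.2 (f p.1 k)) (by fun_prop)

theorem continuous_iSup_of_compactSpace {α β γ : Type*} [ConditionallyCompleteLinearOrder α]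
    [TopologicalSpace α] [OrderTopology α] [TopologicalSpace β] [CompactSpace β]
    [TopologicalSpace γ] {f : γ → β → α} (hf : Continuous ↿f) :
    Continuous fun x => ⨆ y, f x y := by
  simpa only [image_univ, sSup_range] using isCompact_univ.continuous_sSup hf

theorem continuous_denseness_of_partial_orbit_general
    {G X : Type*} [Group G] [TopologicalSpace G]
    [MetricSpace X] [CompactSpace X] [MulAction G X] [ContinuousSMul G X]
    (K : Set G) (hK : IsCompact K) :
    Continuous fun x : X => ⨆ y : X, Metric.infDist y ((fun k : G => k • x) '' K) :=
  continuous_iSup_of_compactSpace <|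
    hK.continuous_infDist_image (f := fun (x : X) (k : G) => k • x) (by fun_prop)

theorem continuous_denseness_of_partial_orbit
    {G X : Type*} [Group G] [TopologicalSpace G] [IsTopologicalGroup G]
    [MetricSpace X] [CompactSpace X] [MulAction G X] [ContinuousSMul G X]
    (K : Set G) (hK : IsCompact K) :
    Continuous fun x : X => ⨆ y : X, Metric.infDist y ((fun k : G => k • x) '' K) :=
  continuous_denseness_of_partial_orbit_general K hK
end

section
/- Let (X,α,G) be a minimal topological dynamical system on a compact metric space, and let (K_n) be an increasing sequence of compact subsets of G with ⋃_n K_n = G. Then the functions κ_{K_n}(x) := sup_{y ∈ X} d(y, K_n·x) converge uniformly on X to zero. -/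
/-!
Minimality plus compactness of `X` give, for each `ε > 0`, one finite set `F ⊆ G` such that
`F • x` is `ε`-dense in `X` for every `x ∈ X`: for a single point, the balls `B(g • x, ε)`
cover `X` and a finite subcover suffices; continuity of the finitely many maps `g • ·`
propagates this to a neighbourhood of `x`, and compactness of `X` patches the neighbourhoods
together. Such an `F` lies in some `K N`, so `κ_{K_n} ≤ ε` for all `n ≥ N`.
-/

open Metric Set Filter Topology

section SmulNet

variable {G X : Type*} [Monoid G] [PseudoMetricSpace X] [MulAction G X]

theorem exists_finset_forall_exists_dist_smul_lt [CompactSpace X] {x : X}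
    (hx : Dense (MulAction.orbit G x)) {ε : ℝ} (hε : 0 < ε) :
    ∃ F : Finset G, ∀ y : X, ∃ g ∈ F, dist y (g • x) < ε := by
  have hcover : univ ⊆ ⋃ g : G, ball (g • x) ε := fun y _ ↦ by
    obtain ⟨_, ⟨g, rfl⟩, hg⟩ := hx.exists_dist_lt y hε
    exact mem_iUnion.2 ⟨g, hg⟩
  obtain ⟨F, hF⟩ := isCompact_univ.elim_finite_subcover _ (fun _ ↦ isOpen_ball) hcover
  refine ⟨F, fun y ↦ ?_⟩
  simpa only [mem_iUnion, mem_ball, exists_prop] using hF (mem_univ y)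

theorem eventually_forall_exists_dist_smul_lt [ContinuousConstSMul G X] {x : X}
    {F : Finset G} {ε δ : ℝ} (hF : ∀ y : X, ∃ g ∈ F, dist y (g • x) < ε) (hεδ : ε < δ) :
    ∀ᶠ x' in 𝓝 x, ∀ y : X, ∃ g ∈ F, dist y (g • x') < δ := by
  have hclose : ∀ᶠ x' in 𝓝 x, ∀ g ∈ F, dist (g • x') (g • x) < δ - ε :=
    (eventually_all_finset F).2 fun g _ ↦
      (continuous_const_smul g).continuousAt.eventually (ball_mem_nhds _ (sub_pos.2 hεδ))
  filter_upwards [hclose] with x' hx' y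
  obtain ⟨g, hgF, hg⟩ := hF y
  refine ⟨g, hgF, ?_⟩
  calc dist y (g • x') ≤ dist y (g • x) + dist (g • x') (g • x) := dist_triangle_right _ _ _
    _ < ε + (δ - ε) := add_lt_add hg (hx' g hgF)
    _ = δ := by ring

theorem exists_finset_forall_forall_exists_dist_smul_lt [CompactSpace X]
    [ContinuousConstSMul G X] (hmin : ∀ x : X, Dense (MulAction.orbit G x))
    {ε : ℝ} (hε : 0 < ε) :
    ∃ F : Finset G, ∀ x y : X, ∃ g ∈ F, dist y (g • x) < ε := by
  classical
  suffices ∃ F : Finset G, ∀ x ∈ (univ : Set X), ∀ y : X, ∃ g ∈ F, dist y (g • x) < ε by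
    simpa only [mem_univ, true_imp_iff] using this
  refine isCompact_univ.induction_on
    (p := fun s ↦ ∃ F : Finset G, ∀ x ∈ s, ∀ y : X, ∃ g ∈ F, dist y (g • x) < ε)
    ⟨∅, fun _ h ↦ h.elim⟩ ?_ ?_ ?_
  · rintro s t hst ⟨F, hF⟩
    exact ⟨F, fun x hx ↦ hF x (hst hx)⟩
  · rintro s t ⟨F, hF⟩ ⟨F', hF'⟩
    refine ⟨F ∪ F', fun x hx y ↦ ?_⟩
    rcases hx with hx | hx
    · obtain ⟨g, hg, hgy⟩ := hF x hx y
      exact ⟨g, Finset.mem_union_left _ hg, hgy⟩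
    · obtain ⟨g, hg, hgy⟩ := hF' x hx y
      exact ⟨g, Finset.mem_union_right _ hg, hgy⟩
  · intro x _
    obtain ⟨F, hF⟩ := exists_finset_forall_exists_dist_smul_lt (hmin x) (half_pos hε)
    exact ⟨_, mem_nhdsWithin_of_mem_nhds
      (eventually_forall_exists_dist_smul_lt hF (half_lt_self hε)), F, fun _ hx' ↦ hx'⟩

end SmulNet
theorem iSup_infDist_smul_image_le {G X : Type*} [SMul G X] [PseudoMetricSpace X] {s : Set G}
    {x : X} {ε : ℝ} (hs : ∀ y : X, ∃ g ∈ s, dist y (g • x) < ε) (hε : 0 ≤ ε) :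
    ⨆ y : X, infDist y ((fun k : G ↦ k • x) '' s) ≤ ε :=
  Real.iSup_le (fun y ↦
    let ⟨_, hg, hgy⟩ := hs y
    (infDist_le_dist_of_mem (mem_image_of_mem _ hg)).trans hgy.le) hε

theorem denseness_tendsto_uniformly_zero_general
    {G X : Type*} [Group G] [TopologicalSpace G]
    [MetricSpace X] [CompactSpace X] [MulAction G X] [ContinuousSMul G X]
    (hmin : ∀ x : X, Dense (MulAction.orbit G x))
    (K : ℕ → Set G) (hKmono : Monotone K)
    (hKunion : (⋃ n, K n) = Set.univ) :
    TendstoUniformly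
      (fun (n : ℕ) (x : X) => ⨆ y : X, Metric.infDist y ((fun k : G => k • x) '' (K n)))
      (fun _ => 0) Filter.atTop := by
  rw [Metric.tendstoUniformly_iff]
  intro ε hε
  obtain ⟨F, hF⟩ := exists_finset_forall_forall_exists_dist_smul_lt hmin (half_pos hε)
  obtain ⟨N, hFN⟩ := hKmono.directed_le.exists_mem_subset_of_finset_subset_biUnion
    (s := F) (by simp only [hKunion, subset_univ])
  filter_upwards [eventually_ge_atTop N] with n hn x
  have hκ := iSup_infDist_smul_image_le (s := K n) (fun y ↦
    let ⟨g, hg, hgy⟩ := hF x y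
    ⟨g, hKmono hn (hFN hg), hgy⟩) (half_pos hε).le
  have hκ_nonneg := Real.iSup_nonneg fun y ↦ infDist_nonneg (x := y)
    (s := (fun k : G ↦ k • x) '' K n)
  rw [dist_zero_left, Real.norm_of_nonneg hκ_nonneg]
  exact hκ.trans_lt (half_lt_self hε)

theorem denseness_tendsto_uniformly_zero
    {G X : Type*} [Group G] [TopologicalSpace G] [IsTopologicalGroup G]
    [LocallyCompactSpace G] [SigmaCompactSpace G]
    [MetricSpace X] [CompactSpace X] [MulAction G X] [ContinuousSMul G X]
    (hmin : ∀ x : X, Dense (MulAction.orbit G x))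
    (K : ℕ → Set G) (hKcompact : ∀ n, IsCompact (K n)) (hKmono : Monotone K)
    (hKunion : (⋃ n, K n) = Set.univ) :
    TendstoUniformly
      (fun (n : ℕ) (x : X) => ⨆ y : X, Metric.infDist y ((fun k : G => k • x) '' (K n)))
      (fun _ => 0) Filter.atTop :=
  denseness_tendsto_uniformly_zero_general hmin K hKmono hKunion
end

section
/- In a minimal topological dynamical system (X,α,G) on a compact metric space, a tuple (x_1,...,x_m) belongs to the regionally proximal m-relation Q_m if and only if for every subset B ⊆ X with non-empty interior and all neighbourhoods U_1,...,U_m of x_1,...,x_m, there exists h ∈ G with α(h,B) ∩ U_i ≠ ∅ for every i ∈ {1,...,m}. -/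
open Metric Set Filter Topology

/-- The regionally proximal `m`-relation: the intersection, over all neighbourhoods `V` of the
diagonal in `X^m`, of the closures of the orbit of `V` under the diagonal action. -/
noncomputable def Qm {G X : Type*} [Group G] [TopologicalSpace X] [MulAction G X]
    (m : ℕ) : Set (Fin m → X) :=
  ⋂ V ∈ 𝓝ˢ {x : Fin m → X | ∀ i j : Fin m, x i = x j},
    closure (⋃ g : G, (fun (x : Fin m → X) (i : Fin m) => g • x i) '' V)

/-!
Unfolding the closure, `x ∈ Qm m` says that every neighbourhood `V` of the diagonal has a
translate `g • V` meeting every box `∏ Uᵢ` around `x`. Choosing `B` with `B^m ⊆ V` gives one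
direction. For the other, minimality moves each diagonal point into `(interior B)^m`, so
`{y | ∃ k, k • y ∈ (interior B)^m}` is an open neighbourhood of the diagonal; if `g • y ∈ ∏ Uᵢ`
with `k • y ∈ (interior B)^m`, then `h := g * k⁻¹` works with `b := k • yᵢ`.
-/

open MulAction

section

variable {G X ι : Type*} [Group G] [TopologicalSpace X] [MulAction G X]

theorem exists_univ_pi_subset_of_mem_nhds {x : ι → X} {t : Set (ι → X)} (ht : t ∈ 𝓝 x) :
    ∃ U : ι → Set X, (∀ i, U i ∈ 𝓝 (x i)) ∧ univ.pi U ⊆ t := by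
  rw [nhds_pi, Filter.mem_pi] at ht
  obtain ⟨I, -, U, hU, hUt⟩ := ht
  exact ⟨U, hU, fun y hy => hUt fun i _ => hy i (mem_univ i)⟩

theorem isOpen_setOf_exists_forall_smul_mem [Finite ι] [ContinuousConstSMul G X] {O : Set X}
    (hO : IsOpen O) : IsOpen {y : ι → X | ∃ g : G, ∀ i, g • y i ∈ O} := by
  simp only [ofPred_exists, ofPred_forall]
  exact isOpen_iUnion fun g => isOpen_iInter_of_finite fun i =>
    hO.preimage ((continuous_const_smul g).comp (continuous_apply i))

theorem setOf_exists_forall_smul_mem_mem_nhdsSet_diagonal [Finite ι] [ContinuousConstSMul G X]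
    [IsMinimal G X] {O : Set X} (hO : IsOpen O) (hne : O.Nonempty) :
    {y : ι → X | ∃ g : G, ∀ i, g • y i ∈ O} ∈ 𝓝ˢ {y : ι → X | ∀ i j, y i = y j} := by
  refine (isOpen_setOf_exists_forall_smul_mem hO).mem_nhdsSet.2 fun y hy => ?_
  cases isEmpty_or_nonempty ι with
  | inl => exact ⟨1, isEmptyElim⟩
  | inr hι =>
    obtain ⟨i₀⟩ := hι
    obtain ⟨g, hg⟩ := hO.exists_smul_mem G (y i₀) hne
    exact ⟨g, fun i => hy i i₀ ▸ hg⟩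

theorem mem_Qm_iff_forall_nhds {m : ℕ} {x : Fin m → X} :
    x ∈ Qm (G := G) m ↔ ∀ V ∈ 𝓝ˢ {y : Fin m → X | ∀ i j, y i = y j},
      ∀ U : Fin m → Set X, (∀ i, U i ∈ 𝓝 (x i)) → ∃ g : G, ∃ y ∈ V, ∀ i, g • y i ∈ U i := by
  simp only [Qm, mem_iInter₂, mem_closure_iff_nhds]
  refine forall₂_congr fun V _ => ⟨fun hV U hU => ?_, fun hV t ht => ?_⟩
  · obtain ⟨_, hzU, hz⟩ := hV _ (set_pi_mem_nhds finite_univ fun i _ => hU i)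
    obtain ⟨g, y, hy, rfl⟩ := mem_iUnion.1 hz
    exact ⟨g, y, hy, fun i => hzU i (mem_univ i)⟩
  · obtain ⟨U, hU, hUt⟩ := exists_univ_pi_subset_of_mem_nhds ht
    obtain ⟨g, y, hy, hyU⟩ := hV U hU
    exact ⟨_, hUt fun i _ => hyU i, mem_iUnion.2 ⟨g, y, hy, rfl⟩⟩

end

theorem mem_Qm_iff_sensitivity_general
    {G X : Type*} [Group G] [MetricSpace X] [MulAction G X]
    (hcont : ∀ g : G, Continuous fun x : X => g • x)
    (hmin : ∀ x : X, Dense (MulAction.orbit G x))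
    (m : ℕ) (hm : 1 ≤ m) (x : Fin m → X) :
    x ∈ Qm (G := G) m ↔
      ∀ B : Set X, (interior B).Nonempty →
        ∀ U : Fin m → Set X, (∀ i, U i ∈ 𝓝 (x i)) →
          ∃ h : G, ∀ i, ∃ b ∈ B, h • b ∈ U i := by
  have : ContinuousConstSMul G X := ⟨hcont⟩
  have : IsMinimal G X := ⟨hmin⟩
  rw [mem_Qm_iff_forall_nhds]
  refine ⟨fun hx B hB U hU => ?_, fun H V hV U hU => ?_⟩
  · obtain ⟨g, y, ⟨k, hk⟩, hyU⟩ := hx _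
      (setOf_exists_forall_smul_mem_mem_nhdsSet_diagonal (G := G) isOpen_interior hB) U hU
    refine ⟨g * k⁻¹, fun i => ⟨k • y i, interior_subset (hk i), ?_⟩⟩
    simpa only [mul_smul, inv_smul_smul] using hyU i
  · let c : X := x ⟨0, hm⟩
    obtain ⟨W, hW, hWV⟩ := exists_univ_pi_subset_of_mem_nhds
      (mem_nhdsSet_iff_forall.1 hV (fun _ => c) fun _ _ => rfl)
    obtain ⟨h, hh⟩ := H (⋂ i, W i) ⟨c, mem_interior_iff_mem_nhds.2 (iInter_mem.2 hW)⟩ U hU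
    choose b hbW hbU using hh
    exact ⟨h, b, hWV fun i _ => mem_iInter.1 (hbW i) i, hbU⟩

theorem mem_Qm_iff_sensitivity
    {G X : Type*} [Group G] [MetricSpace X] [CompactSpace X] [MulAction G X]
    (hcont : ∀ g : G, Continuous fun x : X => g • x)
    (hmin : ∀ x : X, Dense (MulAction.orbit G x))
    (m : ℕ) (hm : 1 ≤ m) (x : Fin m → X) :
    x ∈ Qm (G := G) m ↔
      ∀ B : Set X, (interior B).Nonempty →
        ∀ U : Fin m → Set X, (∀ i, U i ∈ 𝓝 (x i)) →
          ∃ h : G, ∀ i, ∃ b ∈ B, h • b ∈ U i :=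
  mem_Qm_iff_sensitivity_general hcont hmin m hm x
end
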